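/- Let A and B be complex unital Banach algebras, fix c ∈ A and an invertible d ∈ B, and let φ: A → B be a bijective linear map such that φ(a)φ(b) = d whenever ab = c. Set z = φ(1). Then the map ψ(x) = z⁻¹ φ(x) is a unital Jordan homomorphism: ψ(x²) = ψ(x)² for all x ∈ A, and ψ(1) = 1. -/

import Mathlib

/-!
Since `a * b = c` forces `φ a * φ b = d` with `d` invertible, taking `(a, b) = (u, u⁻¹ c)` and
`(c u⁻¹, u)` shows that `φ` sends units to units, with `φ (u⁻¹ c) = (φ u)⁻¹ d`. Hence `φ`, being
additive, carries Hua's identity `u⁻¹ - (u + u²)⁻¹ = (1 + u)⁻¹` to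
`P⁻¹ - (P + Q)⁻¹ = (z + P)⁻¹` with `P = φ u`, `Q = φ (u²)`, `z = φ 1`, and solving for `Q` gives
`φ (u²) = φ u z⁻¹ φ u` whenever `u` and `1 + u` are units. Both are units for `u = t + x` once
`|t|` is large, and the defect `φ (x²) - φ x z⁻¹ φ x` is invariant under `x ↦ t + x`.
-/

open scoped Ring

def PreservesProductsAt {M N : Type*} [Mul M] [Mul N] (φ : M → N) (c : M) (d : N) : Prop :=
  ∀ a b, a * b = c → φ a * φ b = d

theorem isUnit_of_isUnit_mul_of_isUnit_mul {M : Type*} [Monoid M] {a b c : M}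
    (hab : IsUnit (a * b)) (hca : IsUnit (c * a)) : IsUnit a := by
  obtain ⟨u, hu⟩ := hab
  obtain ⟨v, hv⟩ := hca
  refine isUnit_iff_exists_and_exists.mpr ⟨⟨b * ↑u⁻¹, ?_⟩, ⟨↑v⁻¹ * c, ?_⟩⟩
  · rw [← mul_assoc, ← hu, Units.mul_inv]
  · rw [mul_assoc, ← hv, Units.inv_mul]

theorem Units.inv_sub_inv_mul_eq_inv {R : Type*} [Ring R] {u v : Rˣ} (h : (v : R) = 1 + u) :
    (↑u⁻¹ : R) - ↑(u * v)⁻¹ = ↑v⁻¹ := by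
  rw [mul_inv_rev, Units.val_mul]
  calc (↑u⁻¹ : R) - ↑v⁻¹ * ↑u⁻¹ = ↑v⁻¹ * (↑v - 1) * ↑u⁻¹ := by
        rw [mul_sub, Units.inv_mul, mul_one, sub_mul, one_mul]
    _ = ↑v⁻¹ := by rw [h, add_sub_cancel_left, mul_assoc, Units.mul_inv, mul_one]

theorem Ring.eq_mul_inverse_mul_of_inverse_sub_inverse {R : Type*} [Ring R] {p q z : R}
    (hp : IsUnit p) (hpq : IsUnit (p + q)) (hzp : IsUnit (z + p)) (hz : IsUnit z)
    (h : p⁻¹ʳ - (p + q)⁻¹ʳ = (z + p)⁻¹ʳ) : q = p * z⁻¹ʳ * p := by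
  rw [Ring.inverse_sub_inverse (iff_of_true hp hpq), add_sub_cancel_left] at h
  have hzpq : p + q = (z + p) * (p⁻¹ʳ * q) :=
    (Ring.inverse_mul_eq_iff_eq_mul _ _ _ hzp).mp
      ((Ring.eq_mul_inverse_iff_mul_eq _ _ _ hpq).mp h.symm)
  have hzq : z * (p⁻¹ʳ * q) = p := by
    rw [add_mul, Ring.mul_inverse_cancel_left _ _ hp] at hzpq
    exact add_right_cancel hzpq.symm
  rw [mul_assoc, (Ring.inverse_mul_eq_iff_eq_mul _ _ _ hz).mpr hzq.symm,
    Ring.mul_inverse_cancel_left _ _ hp]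

namespace PreservesProductsAt

theorem isUnit_apply {M N : Type*} [Monoid M] [Monoid N] {φ : M → N} {c : M} {d : N}
    (h : PreservesProductsAt φ c d) (hd : IsUnit d) (u : Mˣ) : IsUnit (φ u) :=
  isUnit_of_isUnit_mul_of_isUnit_mul (b := φ (↑u⁻¹ * c)) (c := φ (c * ↑u⁻¹))
    (h _ _ (u.mul_inv_cancel_left c) ▸ hd) (h _ _ (u.inv_mul_cancel_right c) ▸ hd)

theorem apply_inv_mul {M N : Type*} [Monoid M] [MonoidWithZero N] {φ : M → N} {c : M} {d : N}
    (h : PreservesProductsAt φ c d) (hd : IsUnit d) (u : Mˣ) :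
    φ (↑u⁻¹ * c) = (φ u)⁻¹ʳ * d :=
  ((Ring.inverse_mul_eq_iff_eq_mul _ _ _ (h.isUnit_apply hd u)).mpr
    (h _ _ (u.mul_inv_cancel_left c)).symm).symm

theorem apply_mul_self_of_isUnit {A B F : Type*} [Ring A] [Ring B] [FunLike F A B]
    [AddMonoidHomClass F A B] {φ : F} {c : A} {d : B} (h : PreservesProductsAt φ c d)
    (hd : IsUnit d) {u : A} (hu : IsUnit u) (hu1 : IsUnit (1 + u)) :
    φ (u * u) = φ u * (φ 1)⁻¹ʳ * φ u := by
  obtain ⟨u, rfl⟩ := hu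
  obtain ⟨v, hv⟩ := hu1
  have huv : (↑(u * v) : A) = u + u * u := by rw [Units.val_mul, hv, mul_add, mul_one]
  have hua : (φ u)⁻¹ʳ - (φ u + φ (u * u))⁻¹ʳ = (φ 1 + φ u)⁻¹ʳ := by
    have : φ ((↑u⁻¹ - ↑(u * v)⁻¹) * c) = φ (↑v⁻¹ * c) := by rw [Units.inv_sub_inv_mul_eq_inv hv]
    rw [sub_mul, map_sub, h.apply_inv_mul hd, h.apply_inv_mul hd, h.apply_inv_mul hd, ← sub_mul,
      huv, hv, map_add, map_add] at this
    exact hd.mul_left_injective this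
  refine Ring.eq_mul_inverse_mul_of_inverse_sub_inverse (h.isUnit_apply hd u) ?_ ?_
    (by simpa using h.isUnit_apply hd 1) hua
  · simpa [huv] using h.isUnit_apply hd (u * v)
  · simpa [hv] using h.isUnit_apply hd v

end PreservesProductsAt

theorem LinearMap.apply_mul_self_sub_algebraMap_add {k A B : Type*} [CommSemiring k] [Ring A]
    [Algebra k A] [Ring B] [Algebra k B] (φ : A →ₗ[k] B) (hz : IsUnit (φ 1)) (t : k) (x : A) :
    φ ((algebraMap k A t + x) * (algebraMap k A t + x))
        - φ (algebraMap k A t + x) * (φ 1)⁻¹ʳ * φ (algebraMap k A t + x)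
      = φ (x * x) - φ x * (φ 1)⁻¹ʳ * φ x := by
  simp only [Algebra.algebraMap_eq_smul_one, add_mul, mul_add, smul_mul_assoc, mul_smul_comm,
    one_mul, mul_one, map_add, map_smul, Ring.mul_inverse_cancel _ hz,
    Ring.inverse_mul_cancel_right _ _ hz]
  abel

theorem exists_isUnit_algebraMap_add_and_one_add {𝕜 A : Type*} [NontriviallyNormedField 𝕜]
    [NormedRing A] [NormedAlgebra 𝕜 A] [CompleteSpace A] (x : A) :
    ∃ t : 𝕜, IsUnit (algebraMap 𝕜 A t + x) ∧ IsUnit (1 + (algebraMap 𝕜 A t + x)) := by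
  have hunit (s : 𝕜) (hs : ‖x‖ * ‖(1 : A)‖ < ‖s‖) : IsUnit (algebraMap 𝕜 A s + x) := by
    simpa [sub_eq_add_neg] using
      spectrum.mem_resolventSet_iff.mp
        (spectrum.mem_resolventSet_of_norm_lt_mul (a := -x) (by simpa))
  obtain ⟨t, ht⟩ := NormedField.exists_lt_norm 𝕜 (‖x‖ * ‖(1 : A)‖ + 1)
  refine ⟨t, hunit t (by linarith), ?_⟩
  rw [← add_assoc, ← map_one (algebraMap 𝕜 A), ← map_add, add_comm 1]
  refine hunit (t + 1) ?_
  have := norm_sub_le (t + 1) 1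
  rw [add_sub_cancel_right, norm_one] at this
  linarith

theorem stmt14_general {A B : Type*} [NormedRing A] [NormedAlgebra ℂ A] [CompleteSpace A]
    [NormedRing B] [NormedAlgebra ℂ B]
    (c : A) (d : B) (hd : IsUnit d)
    (φ : A →ₗ[ℂ] B)
    (h : ∀ a b : A, a * b = c → φ a * φ b = d) :
    IsUnit (φ 1) ∧ Ring.inverse (φ 1) * φ 1 = 1 ∧
      ∀ x : A, Ring.inverse (φ 1) * φ (x * x)
        = (Ring.inverse (φ 1) * φ x) * (Ring.inverse (φ 1) * φ x) := by
  have hφ : PreservesProductsAt φ c d := h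
  have hz : IsUnit (φ 1) := by simpa using hφ.isUnit_apply hd 1
  refine ⟨hz, Ring.inverse_mul_cancel _ hz, fun x => ?_⟩
  obtain ⟨t, hu, hu1⟩ := exists_isUnit_algebraMap_add_and_one_add (𝕜 := ℂ) x
  have hjordan : φ (x * x) = φ x * (φ 1)⁻¹ʳ * φ x := by
    rw [← sub_eq_zero, ← φ.apply_mul_self_sub_algebraMap_add hz t, sub_eq_zero]
    exact hφ.apply_mul_self_of_isUnit hd hu hu1
  rw [hjordan]
  simp only [mul_assoc]

/-- Theorem 4.1(3). With hypotheses as before and `z = φ 1`, the map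
`ψ x = z⁻¹ * φ x` is a unital Jordan homomorphism: `ψ (x²) = (ψ x)²` for all `x`, and
`ψ 1 = 1`. -/
theorem stmt14 {A B : Type*} [NormedRing A] [NormedAlgebra ℂ A] [CompleteSpace A]
    [NormedRing B] [NormedAlgebra ℂ B] [CompleteSpace B]
    (c : A) (d : B) (hd : IsUnit d)
    (φ : A →ₗ[ℂ] B) (hbij : Function.Bijective φ)
    (h : ∀ a b : A, a * b = c → φ a * φ b = d) :
    IsUnit (φ 1) ∧ Ring.inverse (φ 1) * φ 1 = 1 ∧
      ∀ x : A, Ring.inverse (φ 1) * φ (x * x)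
        = (Ring.inverse (φ 1) * φ x) * (Ring.inverse (φ 1) * φ x) :=
  stmt14_general c d hd φ h
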